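/- Let k ≥ 1, Γ = ℤ/2^k × ℤ/2^k, Q⁺(x₁,x₂) = exp(2πi·x₁x₂/2^k) and q⁺(x₁,x₂) = exp(2πi·x₁x₂/2^{k+1}) on representatives 0 ≤ xᵢ < 2^k, and σ⁺((x₁,x₂),(y₁,y₂)) = exp(2πi(x₁y₂+x₂y₁)/2^{k+1}), with ω := ∂(σ⁺). Then q⁺(a)² = Q⁺(a) and q⁺(a+b)·q⁺(a)⁻¹·q⁺(b)⁻¹ = σ⁺(a,b)·ω(a+b,a,b) for all a,b ∈ Γ. -/
import Mathlib


/-- `ρ(x,y) = 1` if the integer sum of the representatives is `≥ n`, and `0` otherwise. -/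
def rhoCyc (n : ℕ) (x y : ZMod n) : ℕ :=
  if n ≤ x.val + y.val then 1 else 0

/-- `Q⁺(x₁,x₂) = e^{2πi·x₁x₂/2^k}` on representatives `0 ≤ xᵢ < 2^k`. -/
noncomputable def Qplus (k : ℕ) (x : ZMod (2 ^ k) × ZMod (2 ^ k)) : ℂ :=
  Complex.exp (2 * Real.pi * Complex.I * (x.1.val * x.2.val) / (2 ^ k))

/-- `q⁺(x₁,x₂) = e^{2πi·x₁x₂/2^{k+1}}` on representatives. -/
noncomputable def qplus (k : ℕ) (x : ZMod (2 ^ k) × ZMod (2 ^ k)) : ℂ :=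
  Complex.exp (2 * Real.pi * Complex.I * (x.1.val * x.2.val) / (2 ^ (k + 1)))

/-- `σ⁺((x₁,x₂),(y₁,y₂)) = e^{2πi(x₁y₂+x₂y₁)/2^{k+1}}` on representatives. -/
noncomputable def sigmaPlus (k : ℕ) (x y : ZMod (2 ^ k) × ZMod (2 ^ k)) : ℂ :=
  Complex.exp (2 * Real.pi * Complex.I * (x.1.val * y.2.val + x.2.val * y.1.val) / (2 ^ (k + 1)))

/-- `ω = ∂(σ⁺)`, i.e. `ω((a₁,a₂);(x₁,x₂),(y₁,y₂)) = (-1)^{a₁ρ(x₂,y₂)+a₂ρ(x₁,y₁)}`. -/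
def omegaPlus (k : ℕ) (a x y : ZMod (2 ^ k) × ZMod (2 ^ k)) : ℂ :=
  (-1 : ℂ) ^ (a.1.val * rhoCyc (2 ^ k) x.2 y.2 + a.2.val * rhoCyc (2 ^ k) x.1 y.1)

lemma val_add_int (n : ℕ) [NeZero n] (x y : ZMod n) :
    ((x + y).val : ℤ) = x.val + y.val - n * rhoCyc n x y := by
  rw [ZMod.val_add, rhoCyc]
  have hx := ZMod.val_lt x
  have hy := ZMod.val_lt y
  split_ifs with h
  · have : (x.val + y.val) % n = x.val + y.val - n := by
      rw [Nat.mod_eq_sub_mod h, Nat.mod_eq_of_lt (by omega)]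
    rw [this]
    have h2 : n ≤ x.val + y.val := h
    push_cast [h2]
    ring
  · rw [Nat.mod_eq_of_lt (by omega)]
    push_cast
    ring

/-- For `k ≥ 1` and `Γ = ℤ/2^k × ℤ/2^k` with `Q⁺`, `q⁺`, `σ⁺` and `ω = ∂(σ⁺)` as above,
one has `q⁺(a)² = Q⁺(a)` and `q⁺(a+b) q⁺(a)⁻¹ q⁺(b)⁻¹ = σ⁺(a,b)·ω(a+b,a,b)`. -/
theorem stmt_6 (k : ℕ) (hk : 1 ≤ k) (a b : ZMod (2 ^ k) × ZMod (2 ^ k)) :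
    qplus k a ^ 2 = Qplus k a ∧
    qplus k (a + b) * (qplus k a)⁻¹ * (qplus k b)⁻¹ =
      sigmaPlus k a b * omegaPlus k (a + b) a b := by
  have hpow : (2 : ℂ) ^ k ≠ 0 := by norm_num
  have hpow1 : (2 : ℂ) ^ (k + 1) ≠ 0 := by norm_num
  constructor
  · rw [qplus, Qplus, sq, ← Complex.exp_add]
    congr 1
    rw [pow_succ]
    field_simp
    ring
  · rw [qplus, qplus, qplus, sigmaPlus, omegaPlus, ← Complex.exp_neg, ← Complex.exp_neg,
      ← Complex.exp_add, ← Complex.exp_add]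
    rw [show ((-1 : ℂ)) = Complex.exp (Real.pi * Complex.I) by
      rw [Complex.exp_pi_mul_I], ← Complex.exp_nat_mul, ← Complex.exp_add]
    rw [Complex.exp_eq_exp_iff_exists_int]
    obtain ⟨a1,a2⟩ := a
    obtain ⟨b1,b2⟩ := b
    have h1 : (((a1 + b1).val : ℤ)) = a1.val + b1.val - 2 ^ k * rhoCyc (2 ^ k) a1 b1 := by
      have := val_add_int (2 ^ k) a1 b1; push_cast at this ⊢; linarith
    have h2 : (((a2 + b2).val : ℤ)) = a2.val + b2.val - 2 ^ k * rhoCyc (2 ^ k) a2 b2 := by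
      have := val_add_int (2 ^ k) a2 b2; push_cast at this ⊢; linarith
    have h1c : (((a1 + b1).val : ℕ) : ℂ) =
        (a1.val : ℂ) + b1.val - 2 ^ k * rhoCyc (2 ^ k) a1 b1 := by
      exact_mod_cast congrArg (Int.cast : ℤ → ℂ) h1
    have h2c : (((a2 + b2).val : ℕ) : ℂ) =
        (a2.val : ℂ) + b2.val - 2 ^ k * rhoCyc (2 ^ k) a2 b2 := by
      exact_mod_cast congrArg (Int.cast : ℤ → ℂ) h2
    refine ⟨-((rhoCyc (2 ^ k) a1 b1 : ℤ) * (a2.val + b2.val)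
        + (rhoCyc (2 ^ k) a2 b2 : ℤ) * (a1.val + b1.val))
        + 3 * 2 ^ (k - 1) * (rhoCyc (2 ^ k) a1 b1 : ℤ) * (rhoCyc (2 ^ k) a2 b2 : ℤ), ?_⟩
    have hNc : ((2 : ℂ)) ^ k = 2 * 2 ^ (k - 1) := by
      rw [← pow_succ']
      congr 1
      omega
    have hk1 : (2 : ℂ) ^ (k + 1) = 4 * 2 ^ (k - 1) := by
      rw [show k + 1 = (k - 1) + 2 by omega]
      ring
    have h4 : (2 : ℂ) ^ (k - 1) ≠ 0 := by norm_num
    simp only [Prod.fst_add, Prod.snd_add] at *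
    push_cast
    rw [h1c, h2c, hNc, hk1]
    field_simp
    ring
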